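/- arXiv:2406.18975 — 3 statements merged into one kernel-verified Lean document; each statement's English description precedes it below -/
import Mathlib

section
/- Let f be a positive integer and let F : ℂ → ℂ be any function. Then the sum of F over the primitive f-th roots of unity satisfies Σ_{ζ ∈ 𝒫_f} F(ζ) = (1/f) · Σ_{ζ : ζ^f = 1} ζ · F(ζ) · Φ̂_f(ζ) · Φ'_f(ζ), where the second sum ranges over all f-th roots of unity in ℂ and Φ'_f denotes the derivative of the f-th cyclotomic polynomial. -/
/-!
Differentiating `X ^ f - 1 = Φ_f * Φ̂_f` at a root `ζ` of `Φ_f` gives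
`f ζ ^ (f - 1) = Φ'_f(ζ) Φ̂_f(ζ)`, so every primitive `f`-th root of unity carries the weight
`ζ Φ̂_f(ζ) Φ'_f(ζ) = f`. The remaining `f`-th roots of unity are not roots of `Φ_f`, hence are
roots of `Φ̂_f` and carry weight `0`.
-/

open Polynomial Finset

namespace Polynomial

variable {R : Type*} [CommRing R]

theorem cyclotomic_mul_divByMonic_X_pow_sub_one (n : ℕ) :
    cyclotomic n R * ((X ^ n - 1) /ₘ cyclotomic n R) = X ^ n - 1 := by
  obtain ⟨q, hq⟩ := cyclotomic.dvd_X_pow_sub_one n R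
  rw [hq, mul_divByMonic_cancel_left _ (cyclotomic.monic n R)]

theorem eval_derivative_mul_of_isRoot {p q : R[X]} {x : R} (hp : p.IsRoot x) :
    (derivative (p * q)).eval x = (derivative p).eval x * q.eval x := by
  simp [derivative_mul, hp.eq_zero]

end Polynomial

variable {R : Type*} [CommRing R] [IsDomain R]

theorem IsPrimitiveRoot.mul_eval_X_pow_sub_one_divByMonic_mul_eval_derivative_cyclotomic
    {n : ℕ} {ζ : R} (hζ : IsPrimitiveRoot ζ n) (hn : 0 < n) :
    ζ * ((X ^ n - 1) /ₘ cyclotomic n R).eval ζ * (derivative (cyclotomic n R)).eval ζ = n := by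
  have hderiv := eval_derivative_mul_of_isRoot (q := (X ^ n - 1) /ₘ cyclotomic n R)
    (hζ.isRoot_cyclotomic hn)
  rw [cyclotomic_mul_divByMonic_X_pow_sub_one] at hderiv
  simp only [derivative_sub, derivative_X_pow, derivative_one, sub_zero, eval_mul, eval_C,
    eval_pow, eval_X] at hderiv
  calc _ = ζ * ((n : R) * ζ ^ (n - 1)) := by rw [hderiv]; ring
    _ = n * ζ ^ n := by rw [mul_left_comm, ← pow_succ', Nat.sub_add_cancel hn]
    _ = n := by rw [hζ.pow_eq_one, mul_one]

theorem eval_X_pow_sub_one_divByMonic_cyclotomic_eq_zero {n : ℕ} [NeZero (n : R)] {ζ : R}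
    (h : ζ ^ n = 1) (hζ : ¬IsPrimitiveRoot ζ n) :
    ((X ^ n - 1) /ₘ cyclotomic n R).eval ζ = 0 := by
  have := congrArg (eval ζ) (cyclotomic_mul_divByMonic_X_pow_sub_one (R := R) n)
  simp only [eval_mul, eval_sub, eval_pow, eval_X, eval_one, h, sub_self] at this
  exact (mul_eq_zero.1 this).resolve_left (mt isRoot_cyclotomic_iff.1 hζ)

theorem sum_nthRootsFinset_mul_eval_X_pow_sub_one_divByMonic_mul_eval_derivative_cyclotomic
    (n : ℕ) [NeZero (n : R)] (F : R → R) :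
    ∑ ζ ∈ nthRootsFinset n (1 : R),
        ζ * F ζ * ((X ^ n - 1) /ₘ cyclotomic n R).eval ζ *
          (derivative (cyclotomic n R)).eval ζ =
      n * ∑ ζ ∈ primitiveRoots n R, F ζ := by
  have hn : 0 < n := (NeZero.of_neZero_natCast R).pos
  have hsub : primitiveRoots n R ⊆ nthRootsFinset n (1 : R) := fun ζ hζ =>
    (mem_nthRootsFinset hn 1).2 ((mem_primitiveRoots hn).1 hζ).pow_eq_one
  rw [mul_sum, ← sum_subset hsub]
  · refine sum_congr rfl fun ζ hζ => ?_
    have hprim := (mem_primitiveRoots hn).1 hζ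
    rw [← hprim.mul_eval_X_pow_sub_one_divByMonic_mul_eval_derivative_cyclotomic hn]
    ring
  · intro ζ hroot hprim
    rw [mul_right_comm ζ, eval_X_pow_sub_one_divByMonic_cyclotomic_eq_zero
      ((mem_nthRootsFinset hn 1).1 hroot) (mt (mem_primitiveRoots hn).2 hprim),
      mul_zero, zero_mul, zero_mul]

theorem sum_primitiveRoots_eq_general (f : ℕ) (F : ℂ → ℂ) :
    ∑ ζ ∈ primitiveRoots f ℂ, F ζ =
      (1 / (f : ℂ)) * ∑ ζ ∈ nthRootsFinset f (1 : ℂ),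
        ζ * F ζ * ((X ^ f - 1 : ℂ[X]) /ₘ cyclotomic f ℂ).eval ζ *
          (derivative (cyclotomic f ℂ)).eval ζ := by
  rcases eq_or_ne f 0 with rfl | hf
  · simp
  have : NeZero (f : ℂ) := ⟨Nat.cast_ne_zero.2 hf⟩
  rw [sum_nthRootsFinset_mul_eval_X_pow_sub_one_divByMonic_mul_eval_derivative_cyclotomic,
    one_div, inv_mul_cancel_left₀ (NeZero.ne _)]

/-- For a positive integer `f` and any function `F : ℂ → ℂ`,
`∑_{ζ ∈ 𝒫_f} F ζ = (1/f) ∑_{ζ^f = 1} ζ F(ζ) Φ̂_f(ζ) Φ'_f(ζ)`. -/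
theorem sum_primitiveRoots_eq (f : ℕ) (hf : 0 < f) (F : ℂ → ℂ) :
    ∑ ζ ∈ primitiveRoots f ℂ, F ζ =
      (1 / (f : ℂ)) * ∑ ζ ∈ nthRootsFinset f (1 : ℂ),
        ζ * F ζ * ((X ^ f - 1 : ℂ[X]) /ₘ cyclotomic f ℂ).eval ζ *
          (derivative (cyclotomic f ℂ)).eval ζ :=
  sum_primitiveRoots_eq_general f F
end

section
/- Let f be a positive integer, let M be a polynomial with complex coefficients, and let c_0, c_1, …, c_{f−1} ∈ ℂ be the unique coefficients such that M(x)·Φ̂_f(x)·Φ'_f(x) ≡ Σ_{i=0}^{f−1} c_i x^i (mod x^f − 1). Let t be an integer and let t̂ be the unique integer with 1 ≤ t̂ ≤ f and t̂ ≡ t (mod f). Then Σ_{ζ ∈ 𝒫_f} ζ^{−t} · M(ζ) = c_{t̂−1}. -/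
open Polynomial

/-!
Write `Φ = Φ_f` and `Φ̂ = (X^f - 1)/Φ`. At an `f`-th root of unity `ζ` the hypothesis says that
`M Φ̂ Φ'` and `∑ cᵢ Xⁱ` take the same value. If `ζ` is not primitive then `Φ(ζ) ≠ 0`, so
`Φ̂(ζ) = 0`; if it is, differentiating `Φ Φ̂ = X^f - 1` gives `Φ̂(ζ) Φ'(ζ) = f ζ^(f-1)`. Hence
`f ∑_{ζ ∈ 𝒫_f} ζ^(-t) M(ζ) = ∑_{ζ^f = 1} ζ^(1-t) ∑ cᵢ ζⁱ`, and orthogonality of the characters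
`ζ ↦ ζ^k` on the `f`-th roots of unity picks out the coefficient with `i ≡ t - 1 (mod f)`.
-/

namespace IsPrimitiveRoot

variable {K : Type*} [Field K] {ζ₀ : K} {n : ℕ}

theorem sum_nthRootsFinset_zpow (h : IsPrimitiveRoot ζ₀ n) (hn : 0 < n) (k : ℤ) :
    ∑ ζ ∈ nthRootsFinset n (1 : K), ζ ^ k = if (n : ℤ) ∣ k then (n : K) else 0 := by
  split_ifs with hk
  · obtain ⟨m, rfl⟩ := hk
    have hone : ∀ ζ ∈ nthRootsFinset n (1 : K), ζ ^ ((n : ℤ) * m) = 1 := fun ζ hζ => by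
      rw [zpow_mul, zpow_natCast, (Polynomial.mem_nthRootsFinset hn 1).1 hζ, one_zpow]
    simp [Finset.sum_congr rfl hone, h.card_nthRootsFinset]
  · -- multiplication by `ζ₀` permutes the roots of unity but scales the sum by `ζ₀ ^ k ≠ 1`
    have hshift : ∑ ζ ∈ nthRootsFinset n (1 : K), (ζ₀ * ζ) ^ k =
        ∑ ζ ∈ nthRootsFinset n (1 : K), ζ ^ k := by
      have hζ₀ : ζ₀ ≠ 0 := h.ne_zero hn.ne'
      refine Finset.sum_nbij' (ζ₀ * ·) (ζ₀⁻¹ * ·) ?_ ?_ ?_ ?_ fun _ _ => rfl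
      · intro ζ hζ
        simp_all [Polynomial.mem_nthRootsFinset hn, mul_pow, h.pow_eq_one]
      · intro ζ hζ
        simp_all [Polynomial.mem_nthRootsFinset hn, mul_pow, inv_pow, h.pow_eq_one]
      · intro ζ _; simp [hζ₀]
      · intro ζ _; simp [hζ₀]
    rw [funext fun ζ => mul_zpow ζ₀ ζ k, ← Finset.mul_sum] at hshift
    have hne : ζ₀ ^ k ≠ 1 := fun h1 => hk ((h.zpow_eq_one_iff_dvd k).1 h1)
    by_contra hS
    exact hne ((mul_eq_right₀ hS).1 hshift)

theorem sum_nthRootsFinset_zpow_mul_eval_sum (h : IsPrimitiveRoot ζ₀ n) (c : ℕ → K) {k : ℤ}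
    {j : ℕ} (hj : j < n) (hkj : (n : ℤ) ∣ k + j) :
    ∑ ζ ∈ nthRootsFinset n (1 : K), ζ ^ k * eval ζ (∑ i ∈ Finset.range n, C (c i) * X ^ i) =
      n * c j := by
  have hn : 0 < n := by omega
  have hterm : ∀ ζ ∈ nthRootsFinset n (1 : K),
      ζ ^ k * eval ζ (∑ i ∈ Finset.range n, C (c i) * X ^ i) =
        ∑ i ∈ Finset.range n, c i * ζ ^ (k + i) := fun ζ hζ => by
    have hζ : ζ ≠ 0 := ne_zero_of_mem_nthRootsFinset one_ne_zero hζ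
    simp only [eval_finsetSum, eval_mul, eval_C, eval_pow, eval_X, Finset.mul_sum,
      zpow_add₀ hζ, zpow_natCast]
    exact Finset.sum_congr rfl fun i _ => by ring
  rw [Finset.sum_congr rfl hterm, Finset.sum_comm]
  simp only [← Finset.mul_sum, h.sum_nthRootsFinset_zpow hn]
  rw [Finset.sum_eq_single_of_mem j (Finset.mem_range.2 hj), if_pos hkj, mul_comm]
  intro i hi _
  suffices ¬(n : ℤ) ∣ k + i by rw [if_neg this, mul_zero]
  intro hki
  have hdiff : (n : ℤ) ∣ (j : ℤ) - i := by simpa using dvd_sub hkj hki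
  have := Int.eq_zero_of_abs_lt_dvd hdiff (by rw [abs_lt]; have := Finset.mem_range.1 hi; omega)
  omega

end IsPrimitiveRoot

namespace Polynomial

theorem eval_eq_of_X_pow_sub_one_dvd_sub {R : Type*} [CommRing R] {n : ℕ} {p q : R[X]}
    (hpq : (X ^ n - 1 : R[X]) ∣ p - q) {ζ : R} (hζ : ζ ^ n = 1) : eval ζ p = eval ζ q := by
  obtain ⟨g, hg⟩ := hpq
  have := congrArg (eval ζ) hg
  simp only [eval_sub, eval_mul, eval_pow, eval_X, eval_one, hζ, sub_self, zero_mul] at this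
  exact sub_eq_zero.1 this

noncomputable def cyclotomicCofactor (n : ℕ) (R : Type*) [CommRing R] : R[X] :=
  (X ^ n - 1) /ₘ cyclotomic n R

theorem cyclotomic_mul_cyclotomicCofactor (n : ℕ) (R : Type*) [CommRing R] :
    cyclotomic n R * cyclotomicCofactor n R = X ^ n - 1 := by
  obtain ⟨g, hg⟩ := cyclotomic.dvd_X_pow_sub_one n R
  rw [cyclotomicCofactor, hg, mul_divByMonic_cancel_left _ (cyclotomic.monic n R)]

variable {R : Type*} [CommRing R] [IsDomain R] {n : ℕ} {ζ : R}

theorem eval_cyclotomicCofactor_of_not_isPrimitiveRoot [NeZero (n : R)] (hζ : ζ ^ n = 1)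
    (hprim : ¬IsPrimitiveRoot ζ n) : eval ζ (cyclotomicCofactor n R) = 0 := by
  have hprod := congrArg (eval ζ) (cyclotomic_mul_cyclotomicCofactor n R)
  rw [eval_mul, eval_sub, eval_pow, eval_X, eval_one, hζ, sub_self] at hprod
  exact (mul_eq_zero.1 hprod).resolve_left fun h => hprim (isRoot_cyclotomic_iff.1 h)

theorem _root_.IsPrimitiveRoot.eval_cyclotomicCofactor_mul_eval_derivative_cyclotomic
    (h : IsPrimitiveRoot ζ n) (hn : 0 < n) :
    eval ζ (cyclotomicCofactor n R) * eval ζ (derivative (cyclotomic n R)) = n * ζ ^ (n - 1) := by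
  have hderiv := congrArg (eval ζ ∘ derivative) (cyclotomic_mul_cyclotomicCofactor n R)
  simp only [Function.comp_apply, derivative_mul, derivative_sub, derivative_X_pow,
    derivative_one, eval_add, eval_mul, eval_pow, eval_X, eval_C,
    (h.isRoot_cyclotomic hn).eq_zero, zero_mul, add_zero, sub_zero] at hderiv
  rw [mul_comm, hderiv]

theorem sum_nthRootsFinset_zpow_add_one_mul_eval_mul_cyclotomicCofactor_mul_derivative
    {K : Type*} [Field K] [NeZero (n : K)] (M : K[X]) (k : ℤ) :
    ∑ ζ ∈ nthRootsFinset n (1 : K),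
        ζ ^ (k + 1) * eval ζ (M * cyclotomicCofactor n K * derivative (cyclotomic n K)) =
      n * ∑ ζ ∈ primitiveRoots n K, ζ ^ k * eval ζ M := by
  have hn : 0 < n := Nat.pos_of_ne_zero (NeZero.of_neZero_natCast K).out
  have hsub : primitiveRoots n K ⊆ nthRootsFinset n (1 : K) := fun ζ hζ =>
    ((mem_primitiveRoots hn).1 hζ).mem_nthRootsFinset hn
  rw [← Finset.sum_subset hsub, Finset.mul_sum]
  · refine Finset.sum_congr rfl fun ζ hζ => ?_
    have hprim := (mem_primitiveRoots hn).1 hζ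
    have hζ₀ : ζ ≠ 0 := hprim.ne_zero hn.ne'
    rw [eval_mul, eval_mul, mul_assoc (eval ζ M),
      hprim.eval_cyclotomicCofactor_mul_eval_derivative_cyclotomic hn, zpow_add_one₀ hζ₀]
    have hζn : ζ * ζ ^ (n - 1) = 1 := (mul_pow_sub_one hn.ne' ζ).trans hprim.pow_eq_one
    linear_combination (n : K) * ζ ^ k * eval ζ M * hζn
  · intro ζ hζ hnprim
    have hζn := (mem_nthRootsFinset hn 1).1 hζ
    rw [eval_mul, eval_mul, eval_cyclotomicCofactor_of_not_isPrimitiveRoot hζn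
      fun hprim => hnprim ((mem_primitiveRoots hn).2 hprim), mul_zero, zero_mul, mul_zero]

end Polynomial

/-- If `M(x)·Φ̂_f(x)·Φ'_f(x) ≡ ∑_{i=0}^{f-1} c_i x^i (mod x^f - 1)` and
`t̂ ∈ {1, …, f}` with `t̂ ≡ t (mod f)`, then `∑_{ζ ∈ 𝒫_f} ζ^{-t} M(ζ) = c_{t̂-1}`. -/
theorem sum_primitiveRoots_zpow_mul_eval (f : ℕ) (hf : 0 < f) (M : ℂ[X]) (c : ℕ → ℂ)
    (hc : (X ^ f - 1 : ℂ[X]) ∣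
      M * ((X ^ f - 1 : ℂ[X]) /ₘ cyclotomic f ℂ) * derivative (cyclotomic f ℂ) -
        ∑ i ∈ Finset.range f, C (c i) * X ^ i)
    (t : ℤ) (that : ℕ) (h1 : 1 ≤ that) (h2 : that ≤ f)
    (h3 : Int.ModEq (f : ℤ) (that : ℤ) t) :
    ∑ ζ ∈ primitiveRoots f ℂ, ζ ^ (-t) * M.eval ζ = c (that - 1) := by
  have : NeZero f := ⟨hf.ne'⟩
  have hdvd : (f : ℤ) ∣ (-t + 1) + (that - 1 : ℕ) := by
    rw [Nat.cast_sub h1, Nat.cast_one, show -t + 1 + (that - 1 : ℤ) = -(t - that) by ring]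
    exact h3.dvd.neg_right
  refine mul_left_cancel₀ (Nat.cast_ne_zero.2 hf.ne' : (f : ℂ) ≠ 0) ?_
  calc (f : ℂ) * ∑ ζ ∈ primitiveRoots f ℂ, ζ ^ (-t) * M.eval ζ
      = ∑ ζ ∈ nthRootsFinset f (1 : ℂ), ζ ^ (-t + 1) *
          eval ζ (M * cyclotomicCofactor f ℂ * derivative (cyclotomic f ℂ)) :=
        (sum_nthRootsFinset_zpow_add_one_mul_eval_mul_cyclotomicCofactor_mul_derivative M _).symm
    _ = ∑ ζ ∈ nthRootsFinset f (1 : ℂ), ζ ^ (-t + 1) *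
          eval ζ (∑ i ∈ Finset.range f, C (c i) * X ^ i) :=
        Finset.sum_congr rfl fun ζ hζ => congrArg _ <|
          eval_eq_of_X_pow_sub_one_dvd_sub hc ((mem_nthRootsFinset hf 1).1 hζ)
    _ = f * c (that - 1) :=
        (Complex.isPrimitiveRoot_exp f hf.ne').sum_nthRootsFinset_zpow_mul_eval_sum c
          (by omega) hdvd
end

section
/- Let a_1, …, a_N be positive integers and let t ∈ ℚ. In the field of formal Laurent series ℚ((s)), each factor 1 − exp(a_i s) is nonzero, and the coefficient of s^{−1} of the Laurent series exp(−t s) · (Π_{i=1}^{N} (1 − exp(a_i s)))^{−1} equals ((−1)^N / Π_{i=1}^{N} a_i) · Σ_{m=0}^{N−1} ((−t)^m / m!) · A_{N−1−m}, where A_k denotes the coefficient of s^k in the formal power series Π_{i=1}^{N} G(a_i s) and G(x) = Σ_{n ≥ 0} (B_n/n!) x^n is the exponential generating series of the Bernoulli numbers. Consequently, the negative of this s^{−1} coefficient, which is the first Sylvester wave W_1(t; a), equals Σ_{m=0}^{N−1} ((−1)^{N+m+1}/(m! · Π_{i=1}^{N} a_i)) · A_{N−1−m} · t^m, a polynomial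 in t of degree N − 1. -/
/-!
Since `G(x) (e^x - 1) = x`, each factor satisfies `(1 - e^{a s}) G(a s) = -a s`, so in `ℚ((s))`
`(∏ (1 - e^{a_i s}))⁻¹ = s^{-N} ∏ G(a_i s) / ∏ (-a_i)`. The residue of `e^{-ts}` times this is
therefore the coefficient of `s^{N-1}` in `e^{-ts} ∏ G(a_i s)`, divided by `(-1)^N ∏ a_i`.
-/

open PowerSeries

theorem mk_bernoulli_div_factorial_eq :
    (mk fun n => (bernoulli n / n.factorial : ℚ)) = bernoulliPowerSeries ℚ := by
  ext n
  simp [bernoulliPowerSeries, Algebra.algebraMap_self]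

section Bernoulli

variable {R : Type*} [CommRing R] [Algebra ℚ R]

theorem one_sub_rescale_exp_mul_rescale_bernoulli (c : R) :
    (1 - rescale c (exp R)) * rescale c (bernoulliPowerSeries R) = -(C c * X) := by
  have h := congrArg (rescale c) (bernoulliPowerSeries_mul_exp_sub_one R)
  rw [map_mul, map_sub, map_one, rescale_X] at h
  rw [← h]
  ring

theorem prod_one_sub_rescale_exp_mul_prod_rescale_bernoulli {ι : Type*} [Fintype ι]
    (c : ι → R) :
    (∏ i, (1 - rescale (c i) (exp R))) * ∏ i, rescale (c i) (bernoulliPowerSeries R) =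
      C (∏ i, -c i) * X ^ Fintype.card ι := by
  simp_rw [← Finset.prod_mul_distrib, one_sub_rescale_exp_mul_rescale_bernoulli, ← neg_mul,
    Finset.prod_mul_distrib, ← map_neg, ← map_prod, Finset.prod_const, Finset.card_univ]

theorem one_sub_rescale_exp_ne_zero [IsDomain R] {c : R} (hc : c ≠ 0) :
    1 - rescale c (exp R) ≠ 0 := by
  refine left_ne_zero_of_mul (b := rescale c (bernoulliPowerSeries R)) ?_
  rw [one_sub_rescale_exp_mul_rescale_bernoulli, neg_ne_zero]
  exact mul_ne_zero ((map_ne_zero_iff _ C_injective).mpr hc) X_ne_zero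

end Bernoulli

section Laurent

variable {K : Type*} [Field K]

theorem ofPowerSeries_inv_eq_mul_single {f g : K⟦X⟧} {u : K} {N : ℕ} (hu : u ≠ 0)
    (hfg : f * g = C u * X ^ N) :
    (HahnSeries.ofPowerSeries ℤ K f)⁻¹ =
      HahnSeries.ofPowerSeries ℤ K g * HahnSeries.single (-(N : ℤ)) u⁻¹ := by
  refine inv_eq_of_mul_eq_one_right ?_
  rw [← mul_assoc, ← map_mul, hfg, map_mul, HahnSeries.ofPowerSeries_C,
    HahnSeries.ofPowerSeries_X_pow, HahnSeries.C_apply, HahnSeries.single_mul_single,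
    HahnSeries.single_mul_single, zero_add, add_neg_cancel, mul_one, mul_inv_cancel₀ hu,
    HahnSeries.single_zero_one]

theorem coeff_neg_one_ofPowerSeries_mul_single_neg (e g : K⟦X⟧) (N : ℕ) (c : K) :
    (HahnSeries.ofPowerSeries ℤ K e *
        (HahnSeries.ofPowerSeries ℤ K g * HahnSeries.single (-(N : ℤ)) c)).coeff (-1) =
      c * ∑ m ∈ Finset.range N, coeff m e * coeff (N - 1 - m) g := by
  rw [← mul_assoc, ← map_mul, mul_comm]
  cases N with
  | zero =>
    rw [Nat.cast_zero, neg_zero, HahnSeries.single_zero_mul_eq_smul, HahnSeries.coeff_smul,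
      PowerSeries.coeff_coe, if_pos (by norm_num)]
    simp
  | succ n =>
    have hidx : (-1 : ℤ) = (n : ℤ) + -((n + 1 : ℕ) : ℤ) := by push_cast; ring
    rw [hidx, HahnSeries.coeff_single_mul_add, LaurentSeries.coeff_coe_powerSeries, coeff_mul,
      Finset.Nat.sum_antidiagonal_eq_sum_range_succ_mk]
    simp

/-- For positive integers `a_1, …, a_N` and `t ∈ ℚ`, in `ℚ((s))` each factor
`1 - exp(a_i s)` is nonzero, and
`res_{s=0} exp(-ts)/∏(1 - exp(a_i s)) = ((-1)^N/∏ a_i) ∑_{m<N} ((-t)^m/m!) A_{N-1-m}`,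
where `A_k = [s^k] ∏ G(a_i s)` and `G(x) = ∑ B_n x^n/n!`.  Consequently the first Sylvester
wave `W_1(t; a)`, the negative of this residue, equals
`∑_{m<N} ((-1)^{N+m+1}/(m! ∏ a_i)) A_{N-1-m} t^m`. -/
theorem firstWave_residue (N : ℕ) (a : Fin N → ℕ) (ha : ∀ i, 0 < a i) (t : ℚ) (A : ℕ → ℚ)
    (hA : ∀ k, A k = PowerSeries.coeff (R := ℚ) k
      (∏ i, PowerSeries.rescale (a i : ℚ)
        (PowerSeries.mk fun n => bernoulli n / n.factorial))) :
    (∀ i : Fin N, (1 : LaurentSeries ℚ) -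
        HahnSeries.ofPowerSeries ℤ ℚ (PowerSeries.rescale (a i : ℚ) (PowerSeries.exp ℚ)) ≠ 0) ∧
    ((HahnSeries.ofPowerSeries ℤ ℚ (PowerSeries.rescale (-t) (PowerSeries.exp ℚ)) *
        (∏ i, ((1 : LaurentSeries ℚ) -
          HahnSeries.ofPowerSeries ℤ ℚ
            (PowerSeries.rescale (a i : ℚ) (PowerSeries.exp ℚ))))⁻¹).coeff (-1) =
      ((-1 : ℚ) ^ N / ∏ i, (a i : ℚ)) *
        ∑ m ∈ Finset.range N, ((-t) ^ m / m.factorial) * A (N - 1 - m)) ∧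
    (-((HahnSeries.ofPowerSeries ℤ ℚ (PowerSeries.rescale (-t) (PowerSeries.exp ℚ)) *
        (∏ i, ((1 : LaurentSeries ℚ) -
          HahnSeries.ofPowerSeries ℤ ℚ
            (PowerSeries.rescale (a i : ℚ) (PowerSeries.exp ℚ))))⁻¹).coeff (-1)) =
      ∑ m ∈ Finset.range N,
        ((-1 : ℚ) ^ (N + m + 1) / (m.factorial * ∏ i, (a i : ℚ))) * A (N - 1 - m) * t ^ m) := by
  have ha' : ∀ i, (a i : ℚ) ≠ 0 := fun i => Nat.cast_ne_zero.mpr (ha i).ne'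
  have hfactor : ∀ f : ℚ⟦X⟧,
      (1 : LaurentSeries ℚ) - HahnSeries.ofPowerSeries ℤ ℚ f =
        HahnSeries.ofPowerSeries ℤ ℚ (1 - f) := fun f => by rw [map_sub, map_one]
  have hprod := prod_one_sub_rescale_exp_mul_prod_rescale_bernoulli fun i => (a i : ℚ)
  rw [← mk_bernoulli_div_factorial_eq, Fintype.card_fin] at hprod
  have hu : ∏ i, -(a i : ℚ) ≠ 0 := Finset.prod_ne_zero_iff.mpr fun i _ => neg_ne_zero.mpr (ha' i)
  have hres : ((HahnSeries.ofPowerSeries ℤ ℚ (rescale (-t) (exp ℚ)) *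
        (∏ i, ((1 : LaurentSeries ℚ) -
          HahnSeries.ofPowerSeries ℤ ℚ (rescale (a i : ℚ) (exp ℚ))))⁻¹).coeff (-1) =
      ((-1 : ℚ) ^ N / ∏ i, (a i : ℚ)) *
        ∑ m ∈ Finset.range N, ((-t) ^ m / m.factorial) * A (N - 1 - m)) := by
    simp_rw [hfactor, ← map_prod, ofPowerSeries_inv_eq_mul_single hu hprod,
      coeff_neg_one_ofPowerSeries_mul_single_neg, hA, coeff_rescale, coeff_exp]
    congr 1
    · rw [Finset.prod_neg, Finset.card_univ, Fintype.card_fin, mul_inv, div_eq_mul_inv,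
        ← inv_pow, inv_neg, inv_one]
    · simp [div_eq_mul_inv]
  refine ⟨fun i => ?_, hres, ?_⟩
  · rw [hfactor]
    exact (map_ne_zero_iff _ HahnSeries.ofPowerSeries_injective).mpr
      (one_sub_rescale_exp_ne_zero (ha' i))
  · rw [hres, Finset.mul_sum, ← Finset.sum_neg_distrib]
    refine Finset.sum_congr rfl fun m _ => ?_
    field_simp
    ring
end Laurent
end
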